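/- Let ζ be a primitive 13th root of unity generating the cyclotomic field ℚ(ζ₁₃). The polynomial t⁴ + (ζ¹¹ + ζ⁹ + ζ⁸ + ζ⁷ + 2ζ⁶ + 2ζ⁵ + ζ³ + 2ζ² + ζ + 1)·t³ + 2t² + (ζ¹¹ − ζ⁹ + ζ⁸ + ζ⁷ − ζ³ − ζ)·t + 1 is irreducible in the polynomial ring ℚ(ζ₁₃)[t]. -/

import Mathlib

/-!
Since `53 ≡ 1 [MOD 13]`, the residue `10` is a primitive 13th root of unity in `𝔽₅₃`, so
`ζ ↦ 10` defines a ring homomorphism `𝓞 (ℚ(ζ₁₃)) → 𝔽₅₃` (reduction modulo a prime of degree one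
above 53). The polynomial is monic with coefficients in `𝓞 (ℚ(ζ₁₃))`, and its reduction
`t⁴ + 18 t³ + 2 t² + 50 t + 1` has neither a root nor a monic quadratic factor over `𝔽₅₃`, which is
checked exhaustively. Hence the polynomial is irreducible over `𝓞 (ℚ(ζ₁₃))`, and by Gauss's lemma
for the integrally closed ring `𝓞 (ℚ(ζ₁₃))` also over `ℚ(ζ₁₃)`.
-/

open Polynomial NumberField

namespace Polynomial

variable {R : Type*} [CommRing R]

theorem Monic.eq_X_sq_add_C_mul_X_add_C {p : R[X]} (hp : p.Monic) (hdeg : p.natDegree = 2) :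
    p = X ^ 2 + C (p.coeff 1) * X + C (p.coeff 0) := by
  have hlead : p.coeff 2 = 1 := hdeg ▸ hp.coeff_natDegree
  conv_lhs => rw [p.as_sum_range' 3 (by omega)]
  simp [Finset.sum_range_succ, hlead, C_mul_X_pow_eq_monomial.symm]
  ring

theorem X_sq_add_C_mul_X_add_C_dvd_quartic_iff [Nontrivial R] (a b a₃ a₂ a₁ a₀ : R) :
    X ^ 2 + C a * X + C b ∣ X ^ 4 + C a₃ * X ^ 3 + C a₂ * X ^ 2 + C a₁ * X + C a₀ ↔
      a₁ = a * (a₂ - b - a * (a₃ - a)) + b * (a₃ - a) ∧ a₀ = b * (a₂ - b - a * (a₃ - a)) := by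
  set c := a₃ - a
  set d := a₂ - b - a * c
  have hq : (X ^ 2 + C a * X + C b : R[X]).Monic := by monicity!
  have hdiv : C (a₁ - (a * d + b * c)) * X + C (a₀ - b * d) +
      (X ^ 2 + C a * X + C b) * (X ^ 2 + C c * X + C d) =
      X ^ 4 + C a₃ * X ^ 3 + C a₂ * X ^ 2 + C a₁ * X + C a₀ := by
    simp only [c, d, map_sub, map_add, map_mul]
    ring
  have hrem : degree (C (a₁ - (a * d + b * c)) * X + C (a₀ - b * d)) <
      degree (X ^ 2 + C a * X + C b) := by
    have hle : degree (C (a₁ - (a * d + b * c)) * X + C (a₀ - b * d)) ≤ 1 := by compute_degree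
    have hq2 : degree (X ^ 2 + C a * X + C b) = 2 := by compute_degree!
    rw [hq2]
    exact hle.trans_lt (by norm_num)
  rw [← modByMonic_eq_zero_iff_dvd hq, (div_modByMonic_unique _ _ hq ⟨hdiv, hrem⟩).2,
    ← sub_eq_zero (a := a₁), ← sub_eq_zero (a := a₀)]
  refine ⟨fun h ↦ ⟨?_, ?_⟩, fun ⟨h₁, h₀⟩ ↦ by simp [h₁, h₀]⟩
  · simpa using congr_arg (coeff · 1) h
  · simpa using congr_arg (coeff · 0) h

theorem Monic.irreducible_of_natDegree_eq_four [IsDomain R] {f : R[X]} (hf : f.Monic)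
    (hdeg : f.natDegree = 4) (hroot : ∀ x, ¬ f.IsRoot x)
    (hquad : ∀ a b, ¬ X ^ 2 + C a * X + C b ∣ f) : Irreducible f := by
  have hf1 : f ≠ 1 := by rintro rfl; simp at hdeg
  rw [hf.irreducible_iff_lt_natDegree_lt hf1]
  intro q hq hqdeg
  simp only [hdeg, Finset.mem_Ioc] at hqdeg
  obtain hlin | hquadratic : q.natDegree = 1 ∨ q.natDegree = 2 := by omega
  · rw [hq.eq_X_add_C hlin, ← sub_neg_eq_add, ← map_neg, dvd_iff_isRoot]
    exact hroot _
  · rw [hq.eq_X_sq_add_C_mul_X_add_C hquadratic]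
    exact hquad _ _

end Polynomial

theorem IsPrimitiveRoot.exists_ringHom_toInteger_eq_of_isRoot_cyclotomic {n : ℕ} [NeZero n]
    {K : Type*} [Field K] [CharZero K] [IsCyclotomicExtension {n} ℚ K] {ζ : K}
    (hζ : IsPrimitiveRoot ζ n) {S : Type*} [CommRing S] {x : S}
    (hx : (cyclotomic n S).IsRoot x) : ∃ ψ : 𝓞 K →+* S, ψ hζ.toInteger = x := by
  have hminpoly : minpoly ℤ hζ.integralPowerBasis.gen = cyclotomic n ℤ := by
    rw [hζ.integralPowerBasis_gen, ← RingOfIntegers.minpoly_coe]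
    exact (cyclotomic_eq_minpoly hζ (NeZero.pos n)).symm
  have hroot : aeval x (minpoly ℤ hζ.integralPowerBasis.gen) = 0 := by
    rwa [hminpoly, aeval_def, eval₂_eq_eval_map, map_cyclotomic]
  exact ⟨hζ.integralPowerBasis.lift x hroot, by simpa using hζ.integralPowerBasis.lift_gen x hroot⟩

instance fact_prime_fiftyThree : Fact (Nat.Prime 53) := ⟨by norm_num⟩

theorem ZMod.isRoot_cyclotomic_thirteen_ten : (cyclotomic 13 (ZMod 53)).IsRoot 10 := by
  have : Fact (Nat.Prime 13) := ⟨by norm_num⟩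
  refine IsPrimitiveRoot.isRoot_cyclotomic (by norm_num) ?_
  rw [← orderOf_eq_prime (p := 13) (x := (10 : ZMod 53)) (by decide) (by decide)]
  exact IsPrimitiveRoot.orderOf 10

section TwistedAlexander

variable {R S : Type*} [CommRing R] [CommRing S]

/-- `Δ_{12n0019, ρ₉}(t)` with the root of unity `ζ` replaced by an arbitrary `z`. -/
noncomputable def twistedAlexander (z : R) : R[X] :=
  X ^ 4 +
    C (z ^ 11 + z ^ 9 + z ^ 8 + z ^ 7 + 2 * z ^ 6 + 2 * z ^ 5 + z ^ 3 + 2 * z ^ 2 + z + 1) * X ^ 3 +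
    2 * X ^ 2 + C (z ^ 11 - z ^ 9 + z ^ 8 + z ^ 7 - z ^ 3 - z) * X + 1

theorem map_twistedAlexander (f : R →+* S) (z : R) :
    (twistedAlexander z).map f = twistedAlexander (f z) := by
  simp [twistedAlexander, map_ofNat]

theorem monic_twistedAlexander (z : R) : (twistedAlexander z).Monic := by
  unfold twistedAlexander
  monicity!

end TwistedAlexander

theorem twistedAlexander_ten :
    twistedAlexander (10 : ZMod 53) = X ^ 4 + C 18 * X ^ 3 + C 2 * X ^ 2 + C 50 * X + C 1 := by
  have h₃ : (10 : ZMod 53) ^ 11 + 10 ^ 9 + 10 ^ 8 + 10 ^ 7 + 2 * 10 ^ 6 + 2 * 10 ^ 5 + 10 ^ 3 +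
      2 * 10 ^ 2 + 10 + 1 = 18 := by decide
  have h₁ : (10 : ZMod 53) ^ 11 - 10 ^ 9 + 10 ^ 8 + 10 ^ 7 - 10 ^ 3 - 10 = 50 := by decide
  rw [twistedAlexander, h₃, h₁]
  simp only [C_ofNat, C_1]

theorem irreducible_twistedAlexander_ten : Irreducible (twistedAlexander (10 : ZMod 53)) := by
  refine (monic_twistedAlexander _).irreducible_of_natDegree_eq_four ?_ ?_ ?_
  · rw [twistedAlexander_ten]
    compute_degree!
  · have : ∀ x : ZMod 53, x ^ 4 + 18 * x ^ 3 + 2 * x ^ 2 + 50 * x + 1 ≠ 0 := by decide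
    simpa [twistedAlexander_ten] using this
  · simp only [twistedAlexander_ten, X_sq_add_C_mul_X_add_C_dvd_quartic_iff]
    decide

/-- For `ζ` a primitive 13th root of unity in `ℚ(ζ₁₃)`, the polynomial
`t⁴ + (ζ¹¹ + ζ⁹ + ζ⁸ + ζ⁷ + 2ζ⁶ + 2ζ⁵ + ζ³ + 2ζ² + ζ + 1)t³ + 2t²
  + (ζ¹¹ - ζ⁹ + ζ⁸ + ζ⁷ - ζ³ - ζ)t + 1` is irreducible in `ℚ(ζ₁₃)[t]`. -/
theorem stmt_18 (ζ : CyclotomicField 13 ℚ) (hζ : IsPrimitiveRoot ζ 13) :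
    Irreducible
      (X ^ 4 +
        C (ζ ^ 11 + ζ ^ 9 + ζ ^ 8 + ζ ^ 7 + 2 * ζ ^ 6 + 2 * ζ ^ 5 + ζ ^ 3 +
            2 * ζ ^ 2 + ζ + 1) * X ^ 3 +
        2 * X ^ 2 +
        C (ζ ^ 11 - ζ ^ 9 + ζ ^ 8 + ζ ^ 7 - ζ ^ 3 - ζ) * X + 1 :
        Polynomial (CyclotomicField 13 ℚ)) := by
  -- The library instance is stated for `CyclotomicField.algebra`, which is not reducibly
  -- the `algebraRat` structure used by `IsPrimitiveRoot.integralPowerBasis`.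
  have : IsCyclotomicExtension {13} ℚ (CyclotomicField 13 ℚ) := by
    convert CyclotomicField.isCyclotomicExtension 13 ℚ
    · rfl
    · exact Subsingleton.elim _ _
  obtain ⟨ψ, hψ⟩ :=
    hζ.exists_ringHom_toInteger_eq_of_isRoot_cyclotomic ZMod.isRoot_cyclotomic_thirteen_ten
  have hmonic := monic_twistedAlexander hζ.toInteger
  have hirr : Irreducible (twistedAlexander hζ.toInteger) := by
    refine hmonic.irreducible_of_irreducible_map ψ _ ?_
    rw [map_twistedAlexander, hψ]
    exact irreducible_twistedAlexander_ten
  have hirrK := (hmonic.irreducible_iff_irreducible_map_fraction_map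
    (K := CyclotomicField 13 ℚ)).mp hirr
  rw [map_twistedAlexander] at hirrK
  exact hirrK
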